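/- For every element q_i ∈ Q, the graph G = G(Q,S) has no P_5-witness structure W with W(p_1) = {v} and W(p_5) = {q_i}. -/
import Mathlib


/-- `W` is an `H`-witness structure of `G`: a family of pairwise disjoint nonempty
connected subsets of `V(G)` covering `V(G)` such that distinct `h₁ h₂` are adjacent in `H`
iff there is an edge of `G` between `W h₁` and `W h₂`. -/
def IsWitnessStructure {V U : Type*} (G : SimpleGraph V) (H : SimpleGraph U)
    (W : U → Set V) : Prop :=
  (∀ h, (W h).Nonempty) ∧
  (∀ h₁ h₂, h₁ ≠ h₂ → Disjoint (W h₁) (W h₂)) ∧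
  (⋃ h, W h) = Set.univ ∧
  (∀ h, (G.induce (W h)).Connected) ∧
  (∀ h₁ h₂, h₁ ≠ h₂ → ((∃ a ∈ W h₁, ∃ b ∈ W h₂, G.Adj a b) ↔ H.Adj h₁ h₂))

/-- `G` contains `H` as a contraction. -/
def ContainsAsContraction {V U : Type*} (G : SimpleGraph V) (H : SimpleGraph U) : Prop :=
  ∃ W : U → Set V, IsWitnessStructure G H W

/-- Raw vertex names for the graph `G(Q,S)`: elements `q_i`, hyperedges `S_j`,
copies `S_j'`, subdivision vertices `q^i_j`, and special vertices `q*`, `u₁`, `u₂`, `v`, `w`. -/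
inductive HVertex (m n : ℕ) : Type
  | elt : Fin m → HVertex m n
  | hyp : Fin n → HVertex m n
  | copy : Fin n → HVertex m n
  | sub : Fin m → Fin n → HVertex m n
  | qstar : HVertex m n
  | u1 : HVertex m n
  | u2 : HVertex m n
  | v : HVertex m n
  | w : HVertex m n

/-- A raw vertex name is an actual vertex of `G(Q,S)`: the subdivision vertex `q^i_j`
exists only when `q_i ∈ S_j`. -/
def HVertex.OK {m n : ℕ} (S : Fin n → Set (Fin m)) : HVertex m n → Prop
  | .sub i j => i ∈ S j
  | _ => True

/-- The vertex set of `G(Q,S)`. -/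
def GVertex {m n : ℕ} (S : Fin n → Set (Fin m)) : Type := {x : HVertex m n // x.OK S}

/-- The (asymmetrically listed) edges of `G(Q,S)`:
`q^i_j q_i`, `q^i_j S_j`, `q_i S_j'` (for `q_i ∈ S_j`), `S_j S_k'` (all `j,k`),
`q* u₁`, `q* u₂`, `q* q^i_j`, `u₁ S_j`, `u₂ S_j`, `u₁ v`, `u₂ v`, `w S_j'`. -/
def baseAdj {m n : ℕ} (S : Fin n → Set (Fin m)) : HVertex m n → HVertex m n → Prop
  | .sub i _, .elt i' => i = i'
  | .sub _ j, .hyp j' => j = j'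
  | .elt i, .copy j => i ∈ S j
  | .hyp _, .copy _ => True
  | .qstar, .u1 => True
  | .qstar, .u2 => True
  | .qstar, .sub _ _ => True
  | .u1, .hyp _ => True
  | .u2, .hyp _ => True
  | .u1, .v => True
  | .u2, .v => True
  | .w, .copy _ => True
  | _, _ => False

/-- The graph `G = G(Q,S)`. -/
def GQS {m n : ℕ} (S : Fin n → Set (Fin m)) : SimpleGraph (GVertex S) :=
  SimpleGraph.fromRel (fun a b => baseAdj S a.1 b.1)

theorem stmt_10 {m n : ℕ} (S : Fin n → Set (Fin m)) (hn : 2 ≤ n)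
    (hSne : ∀ j, (S j).Nonempty) (hSlast : S ⟨n - 1, by omega⟩ = Set.univ) (i : Fin m) :
    ¬ ∃ W : Fin 5 → Set (GVertex S),
        IsWitnessStructure (GQS S) (SimpleGraph.pathGraph 5) W ∧
        W 0 = {(⟨.v, trivial⟩ : GVertex S)} ∧
        W 4 = {(⟨.elt i, trivial⟩ : GVertex S)} := by
  rintro ⟨W, ⟨hne, hdisj, hcover, hconn, hadj⟩, hW0, hW4⟩
  -- named vertices
  set vV : GVertex S := ⟨.v, trivial⟩ with hvV
  set qiV : GVertex S := ⟨.elt i, trivial⟩ with hqiV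
  set u1V : GVertex S := ⟨.u1, trivial⟩ with hu1V
  set u2V : GVertex S := ⟨.u2, trivial⟩ with hu2V
  set qsV : GVertex S := ⟨.qstar, trivial⟩ with hqsV
  have hjn : (n - 1 : ℕ) < n := by omega
  set jn : Fin n := ⟨n - 1, hjn⟩ with hjnd
  have hiS : i ∈ S jn := by
    have : S jn = Set.univ := hSlast
    rw [this]; trivial
  set subV : GVertex S := ⟨.sub i jn, hiS⟩ with hsubV
  set cpnV : GVertex S := ⟨.copy jn, trivial⟩ with hcpnV
  -- adjacency helper
  have gadj : ∀ (a b : GVertex S), a.1 ≠ b.1 → baseAdj S a.1 b.1 → (GQS S).Adj a b := by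
    intro a b hab hb
    simp only [GQS, SimpleGraph.fromRel_adj]
    exact ⟨fun h => hab (congrArg Subtype.val h), Or.inl hb⟩
  have a1 : (GQS S).Adj u1V vV := gadj _ _ (fun h => nomatch h) trivial
  have a2 : (GQS S).Adj u2V vV := gadj _ _ (fun h => nomatch h) trivial
  have a3 : (GQS S).Adj subV qiV := gadj _ _ (fun h => nomatch h) rfl
  have a4 : (GQS S).Adj qsV subV := gadj _ _ (fun h => nomatch h) trivial
  have a5 : (GQS S).Adj qiV cpnV := gadj _ _ (fun h => nomatch h) hiS
  have a6 : ∀ j : Fin n, (GQS S).Adj ⟨.hyp j, trivial⟩ cpnV :=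
    fun j => gadj _ _ (fun h => nomatch h) trivial
  -- placement helper
  have hmem : ∀ x : GVertex S, ∃ h, x ∈ W h := by
    intro x
    have : x ∈ ⋃ h, W h := by rw [hcover]; trivial
    exact Set.mem_iUnion.mp this
  have place : ∀ (x : GVertex S) (h : Fin 5), x ∈ W h → ∀ (y : GVertex S) (k : Fin 5),
      y ∈ W k → (GQS S).Adj x y → h ≠ k → (SimpleGraph.pathGraph 5).Adj h k :=
    fun x h hx y k hy hxy hne' => (hadj h k hne').mp ⟨x, hx, y, hy, hxy⟩
  have p0 : ∀ h : Fin 5, (SimpleGraph.pathGraph 5).Adj h 0 → h = 1 := by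
    intro h hh; rw [SimpleGraph.pathGraph_adj] at hh; fin_omega
  have p4 : ∀ h : Fin 5, (SimpleGraph.pathGraph 5).Adj h 4 → h = 3 := by
    intro h hh; rw [SimpleGraph.pathGraph_adj] at hh; fin_omega
  have p13 : ¬ (SimpleGraph.pathGraph 5).Adj 1 3 := by
    rw [SimpleGraph.pathGraph_adj]; fin_omega
  have hv0 : vV ∈ W 0 := by rw [hW0]; rfl
  have hqi4 : qiV ∈ W 4 := by rw [hW4]; rfl
  -- u1 ∈ W 1
  have placeV : ∀ x : GVertex S, x.1 ≠ HVertex.v → (GQS S).Adj x vV → x ∈ W 1 := by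
    intro x hxv hxadj
    obtain ⟨h, hx⟩ := hmem x
    have hne0 : h ≠ 0 := by
      intro e; subst e; rw [hW0] at hx
      exact hxv (congrArg Subtype.val hx)
    have := place x h hx vV 0 hv0 hxadj hne0
    rw [p0 h this] at hx; exact hx
  have hu1 : u1V ∈ W 1 := placeV u1V (fun h => nomatch h) a1
  have hu2 : u2V ∈ W 1 := placeV u2V (fun h => nomatch h) a2
  -- neighbors of q_i lie in W 3
  have placeQ : ∀ x : GVertex S, x.1 ≠ HVertex.elt i → (GQS S).Adj x qiV → x ∈ W 3 := by
    intro x hxq hxadj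
    obtain ⟨h, hx⟩ := hmem x
    have hne4 : h ≠ 4 := by
      intro e; subst e; rw [hW4] at hx
      exact hxq (congrArg Subtype.val hx)
    have := place x h hx qiV 4 hqi4 hxadj hne4
    rw [p4 h this] at hx; exact hx
  have hsub3 : subV ∈ W 3 := placeQ subV (fun h => nomatch h) a3
  have hcpn3 : cpnV ∈ W 3 := placeQ cpnV (fun h => nomatch h) (a5.symm)
  -- q* not in W 1
  have hqs1 : qsV ∉ W 1 := by
    intro hq
    exact p13 (place qsV 1 hq subV 3 hsub3 a4 (by decide))
  -- no hyperedge vertex in W 1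
  have hhyp1 : ∀ (j : Fin n) (hj : HVertex.OK S (.hyp j)),
      (⟨.hyp j, hj⟩ : GVertex S) ∉ W 1 := by
    intro j hj hq
    exact p13 (place ⟨.hyp j, hj⟩ 1 hq cpnV 3 hcpn3 (a6 j) (by decide))
  -- v not in W 1
  have hv1 : vV ∉ W 1 := fun h =>
    Set.disjoint_left.mp (hdisj 0 1 (by decide)) hv0 h
  -- u1 has no neighbor inside W 1
  have key : ∀ y : GVertex S, y ∈ W 1 → ¬ (GQS S).Adj u1V y := by
    rintro ⟨z, hz⟩ hzW hA
    simp only [GQS, SimpleGraph.fromRel_adj] at hA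
    obtain ⟨-, h | h⟩ := hA
    · cases z with
      | hyp j => exact hhyp1 j hz hzW
      | v => exact hv1 hzW
      | elt i' => exact h
      | copy j => exact h
      | sub i' j => exact h
      | qstar => exact h
      | u1 => exact h
      | u2 => exact h
      | w => exact h
    · cases z with
      | qstar => exact hqs1 hzW
      | elt i' => exact h
      | copy j => exact h
      | sub i' j => exact h
      | hyp j => exact h
      | v => exact h
      | u1 => exact h
      | u2 => exact h
      | w => exact h
  -- but W 1 is connected and contains both u1 and u2
  have hc := (hconn 1).preconnected ⟨u1V, hu1⟩ ⟨u2V, hu2⟩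
  obtain ⟨p⟩ := hc
  have hnil : ¬ p.Nil := SimpleGraph.Walk.not_nil_of_ne (by
    intro h
    exact absurd (congrArg (fun x => (Subtype.val (Subtype.val x))) h) (fun h => nomatch h))
  have hadj1 := SimpleGraph.Walk.adj_snd hnil
  exact key (p.getVert 1).1 (p.getVert 1).2 hadj1
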